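/- Fix an integer m ≥ 0 and let k = 2m + 1. For j ∈ {1, 2} and x ≥ 0, define h_{k,j}(x) as the finite continued fraction h_{k,j}(x) = x + 1/(x + 2/(⋯ + k/(√(k + j/2 + (x/2)²) + x/2))); formally, set b_k(x) = √(k + j/2 + (x/2)²) + x/2 and b_{i-1}(x) = x + i/b_i(x) for i = k, k-1, …, 1, and put h_{k,j}(x) = b_0(x). Then for all x ≥ 0: φ(x)/h_{2m+1,1}(x) < 1 - Φ(x) < φ(x)/h_{2m+1,2}(x) (Shenton's bounds, odd case). -/

import Mathlib

open MeasureTheory Real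

/-- Standard Gaussian density. -/
noncomputable def gaussPdf (x : ℝ) : ℝ := Real.exp (-x ^ 2 / 2) / Real.sqrt (2 * Real.pi)

/-- Standard Gaussian distribution function. -/
noncomputable def gaussCdf (x : ℝ) : ℝ := ∫ t in Set.Iic x, gaussPdf t

/-- Finite continued fraction `hcf k g x = x + 1/(x + 2/(⋯ + k/(g x)))`,
with `hcf 0 g = g`. -/
noncomputable def hcf : ℕ → (ℝ → ℝ) → ℝ → ℝ
  | 0, g => g
  | (k + 1), g => hcf k (fun x => x + ((k : ℝ) + 1) / g x)

/-!
Write `F n x = ∫_0^∞ t^n e^{-xt-t²/2} dt`. Substituting `x + t` in the tail integral gives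
`1 - Φ(x) = φ(x) F 0 x`, and integration by parts gives `x F 0 + F 1 = 1` and
`F (n+2) = (n+1) F n - x F (n+1)`. So the ratios `r n = F (n+1) / F n` satisfy
`x + r (n+1) = (n+1) / r n`, and `1 / F 0` is exactly the continued fraction `h_k` with innermost
term `x + r k`.

It remains to place `x + r k` strictly between the two innermost terms `√(k + j/2 + x²/4) + x/2`,
i.e. to show `k + 1/2 < r k ² + x r k < k + 1`. Multiplied by `F k ² e^{-x²/2}`, both differences
become functions tending to `0` at infinity with negative derivatives (`-F k F (k+1) e^{-x²/2}` and
`-x F k ² e^{-x²/2}`, using `F n' = -F (n+1)` and the recurrence), hence positive. For odd `k` the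
continued fraction is strictly decreasing in its innermost term, which turns this into the bounds.
-/

open Set Filter Topology Asymptotics

lemma pow_mul_exp_linear_sub_sq_le (n : ℕ) (c : ℝ) {t : ℝ} (ht : 0 ≤ t) :
    t ^ n * exp (c * t - t ^ 2 / 2) ≤ exp (c ^ 2) * (t ^ n * exp (-(1 / 4) * t ^ 2)) := by
  rw [mul_left_comm, ← exp_add]
  gcongr
  nlinarith [sq_nonneg (c - t / 2)]

lemma integrableOn_pow_mul_exp_linear_sub_sq (n : ℕ) (c : ℝ) :
    IntegrableOn (fun t => t ^ n * exp (c * t - t ^ 2 / 2)) (Ioi 0) := by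
  have hdom : IntegrableOn (fun t : ℝ => exp (c ^ 2) * (t ^ n * exp (-(1 / 4) * t ^ 2)))
      (Ioi 0) := by
    have := (integrableOn_rpow_mul_exp_neg_mul_sq (b := 1 / 4) (by norm_num) (s := n)
      (by linarith [n.cast_nonneg (α := ℝ)])).const_mul (exp (c ^ 2))
    simp only [rpow_natCast] at this
    exact this
  refine hdom.mono' (by fun_prop) ?_
  filter_upwards [ae_restrict_mem measurableSet_Ioi] with t (ht : 0 < t)
  rw [norm_of_nonneg (by positivity)]
  exact pow_mul_exp_linear_sub_sq_le n c ht.le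

lemma tendsto_pow_mul_exp_linear_sub_sq (n : ℕ) (c : ℝ) :
    Tendsto (fun t => t ^ n * exp (c * t - t ^ 2 / 2)) atTop (𝓝 0) := by
  have hdom : Tendsto (fun t : ℝ => exp (c ^ 2) * (t ^ n * exp (-(1 / 4) * t ^ 2))) atTop
      (𝓝 0) := by
    have := ((tendsto_rpow_abs_mul_exp_neg_mul_sq_cocompact (a := 1 / 4) (by norm_num) n).mono_left
      atTop_le_cocompact).const_mul (exp (c ^ 2))
    rw [mul_zero] at this
    refine this.congr' ?_
    filter_upwards [eventually_ge_atTop 0] with t ht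
    rw [abs_of_nonneg ht, rpow_natCast]
  refine squeeze_zero' ?_ ?_ hdom
  · filter_upwards [eventually_ge_atTop 0] with t ht
    positivity
  · filter_upwards [eventually_ge_atTop 0] with t ht
    exact pow_mul_exp_linear_sub_sq_le n c ht

noncomputable def millsIntegral (n : ℕ) (x : ℝ) : ℝ :=
  ∫ t in Ioi 0, t ^ n * exp (-x * t - t ^ 2 / 2)

lemma millsIntegral_pos (n : ℕ) (x : ℝ) : 0 < millsIntegral n x := by
  have hnonneg :
      0 ≤ᵐ[volume.restrict (Ioi 0)] fun t : ℝ => t ^ n * exp (-x * t - t ^ 2 / 2) := by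
    filter_upwards [ae_restrict_mem measurableSet_Ioi] with t (ht : 0 < t)
    positivity
  rw [millsIntegral, setIntegral_pos_iff_support_of_nonneg_ae hnonneg
    (integrableOn_pow_mul_exp_linear_sub_sq n (-x))]
  have hsupp :
      Function.support (fun t : ℝ => t ^ n * exp (-x * t - t ^ 2 / 2)) ∩ Ioi 0 = Ioi 0 :=
    inter_eq_right.2 fun t (ht : 0 < t) => Function.mem_support.2 (by positivity)
  rw [hsupp, Real.volume_Ioi]
  exact ENNReal.zero_lt_top

lemma hasDerivAt_millsIntegral (n : ℕ) (x : ℝ) :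
    HasDerivAt (millsIntegral n) (-millsIntegral (n + 1) x) x := by
  have hderiv (t y : ℝ) : HasDerivAt (fun y => t ^ n * exp (-y * t - t ^ 2 / 2))
      (-(t ^ (n + 1) * exp (-y * t - t ^ 2 / 2))) y := by
    have h : HasDerivAt (fun y => -y * t - t ^ 2 / 2) (-t) y :=
      (((hasDerivAt_neg y).mul_const t).sub_const (t ^ 2 / 2)).congr_deriv (by ring)
    exact (h.exp.const_mul (t ^ n)).congr_deriv (by ring)
  have hbound : ∀ t ∈ Ioi (0 : ℝ), ∀ y ∈ Metric.ball x 1,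
      ‖-(t ^ (n + 1) * exp (-y * t - t ^ 2 / 2))‖
        ≤ t ^ (n + 1) * exp ((|x| + 1) * t - t ^ 2 / 2) := fun t (ht : 0 < t) y hy => by
    have hy : -y ≤ |x| + 1 := by
      rw [Metric.mem_ball, dist_eq] at hy
      linarith [neg_abs_le (y - x), neg_abs_le x]
    rw [norm_neg, norm_of_nonneg (by positivity)]
    gcongr
  have key := hasDerivAt_integral_of_dominated_loc_of_deriv_le (μ := volume.restrict (Ioi 0))
    (F := fun y t => t ^ n * exp (-y * t - t ^ 2 / 2))
    (F' := fun y t => -(t ^ (n + 1) * exp (-y * t - t ^ 2 / 2)))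
    (x₀ := x) (Metric.ball_mem_nhds x one_pos) (Eventually.of_forall fun y => by fun_prop)
    (integrableOn_pow_mul_exp_linear_sub_sq n (-x)) (by fun_prop)
    ((ae_restrict_iff' measurableSet_Ioi).2 (Eventually.of_forall hbound))
    (integrableOn_pow_mul_exp_linear_sub_sq (n + 1) (|x| + 1))
    (Eventually.of_forall fun t y _ => hderiv t y)
  rw [integral_neg] at key
  exact key.2

lemma strictAnti_millsIntegral (n : ℕ) : StrictAnti (millsIntegral n) :=
  strictAnti_of_hasDerivAt_neg (hasDerivAt_millsIntegral n)
    fun x => neg_neg_of_pos (millsIntegral_pos (n + 1) x)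

lemma hasDerivAt_exp_neg_mul_sub_sq_div_two (x t : ℝ) :
    HasDerivAt (fun t => exp (-x * t - t ^ 2 / 2)) (exp (-x * t - t ^ 2 / 2) * (-x - t)) t := by
  have h : HasDerivAt (fun t => -x * t - t ^ 2 / 2) (-x - t) t :=
    (((hasDerivAt_id t).const_mul (-x)).fun_sub ((hasDerivAt_pow 2 t).div_const 2)).congr_deriv
      (by norm_num)
  exact h.exp

lemma mul_millsIntegral_zero_add_one (x : ℝ) :
    x * millsIntegral 0 x + millsIntegral 1 x = 1 := by
  have hint := integrableOn_pow_mul_exp_linear_sub_sq (c := -x)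
  have h := integral_Ioi_of_hasDerivAt_of_tendsto' (a := 0) (m := 0)
    (f' := fun t => -(x * (t ^ 0 * exp (-x * t - t ^ 2 / 2)) + t ^ 1 * exp (-x * t - t ^ 2 / 2)))
    (fun t _ => (hasDerivAt_exp_neg_mul_sub_sq_div_two x t).congr_deriv (by ring))
    (((hint 0).const_mul x).fun_add (hint 1)).fun_neg
    (by simpa only [pow_zero, one_mul] using tendsto_pow_mul_exp_linear_sub_sq 0 (-x))
  rw [integral_neg, integral_add ((hint 0).const_mul x) (hint 1), integral_const_mul] at h
  unfold millsIntegral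
  norm_num at h ⊢
  linarith

lemma millsIntegral_add_two (n : ℕ) (x : ℝ) :
    millsIntegral (n + 2) x = (n + 1) * millsIntegral n x - x * millsIntegral (n + 1) x := by
  have hint := integrableOn_pow_mul_exp_linear_sub_sq (c := -x)
  have h := integral_Ioi_of_hasDerivAt_of_tendsto' (a := 0) (m := 0)
    (f' := fun t => ((n : ℝ) + 1) * (t ^ n * exp (-x * t - t ^ 2 / 2))
      - x * (t ^ (n + 1) * exp (-x * t - t ^ 2 / 2)) - t ^ (n + 2) * exp (-x * t - t ^ 2 / 2))
    (fun t _ => ((hasDerivAt_pow (n + 1) t).mul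
      (hasDerivAt_exp_neg_mul_sub_sq_div_two x t)).congr_deriv (by push_cast; ring))
    ((((hint n).const_mul _).sub' ((hint (n + 1)).const_mul x)).sub' (hint (n + 2)))
    (tendsto_pow_mul_exp_linear_sub_sq (n + 1) (-x))
  rw [integral_sub (((hint n).const_mul _).sub' ((hint (n + 1)).const_mul x)) (hint (n + 2)),
    integral_sub ((hint n).const_mul _) ((hint (n + 1)).const_mul x),
    integral_const_mul, integral_const_mul] at h
  unfold millsIntegral
  norm_num at h ⊢
  linarith

lemma gaussPdf_pos (x : ℝ) : 0 < gaussPdf x := by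
  unfold gaussPdf
  positivity

lemma gaussPdf_eq_exp_mul (t : ℝ) :
    gaussPdf t = exp (-(1 / 2) * t ^ 2) * (√(2 * π))⁻¹ := by
  rw [gaussPdf, div_eq_mul_inv, neg_div, neg_mul, one_div_mul_eq_div]

lemma integrable_gaussPdf : Integrable gaussPdf := by
  simp only [funext gaussPdf_eq_exp_mul]
  exact (integrable_exp_neg_mul_sq (by norm_num)).mul_const _

lemma integral_gaussPdf : ∫ t, gaussPdf t = 1 := by
  simp only [gaussPdf_eq_exp_mul]
  rw [integral_mul_const, integral_gaussian, show π / (1 / 2) = 2 * π by ring,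
    mul_inv_cancel₀ (by positivity)]

lemma gaussPdf_add (x t : ℝ) : gaussPdf (t + x) = gaussPdf x * exp (-x * t - t ^ 2 / 2) := by
  rw [gaussPdf, gaussPdf, div_mul_eq_mul_div, ← exp_add]
  ring_nf

lemma one_sub_gaussCdf (x : ℝ) : 1 - gaussCdf x = gaussPdf x * millsIntegral 0 x := by
  have htail : ∫ t in Ioi x, gaussPdf t = gaussPdf x * millsIntegral 0 x := by
    have hshift := (Homeomorph.addRight x).measurableEmbedding.setIntegral_map
      (μ := volume) gaussPdf (Ioi x)
    simp only [Homeomorph.coe_addRight, map_add_right_eq_self] at hshift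
    rw [show (· + x) ⁻¹' Ioi x = Ioi 0 by ext; simp] at hshift
    simp only [gaussPdf_add] at hshift
    simp only [hshift, millsIntegral, pow_zero, one_mul, integral_const_mul]
  rw [gaussCdf, ← integral_gaussPdf, ← intervalIntegral.integral_Iic_add_Ioi
    integrable_gaussPdf.integrableOn integrable_gaussPdf.integrableOn, htail, add_sub_cancel_left]

noncomputable def contFrac : ℕ → ℝ → ℝ → ℝ
  | 0, _, a => a
  | k + 1, x, a => contFrac k x (x + ((k : ℝ) + 1) / a)

section ContFrac

lemma hcf_eq_contFrac (k : ℕ) (g : ℝ → ℝ) (x : ℝ) : hcf k g x = contFrac k x (g x) := by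
  induction k generalizing g with
  | zero => rfl
  | succ k ih => exact ih _

variable {x : ℝ}

lemma mapsTo_contFrac_step (k : ℕ) (hx : 0 ≤ x) :
    MapsTo (fun a => x + ((k : ℝ) + 1) / a) (Ioi 0) (Ioi 0) :=
  fun a (ha : 0 < a) => show 0 < x + ((k : ℝ) + 1) / a by positivity

lemma contFrac_pos (k : ℕ) (hx : 0 ≤ x) {a : ℝ} (ha : 0 < a) : 0 < contFrac k x a := by
  induction k generalizing a with
  | zero => exact ha
  | succ k ih => exact ih (mapsTo_contFrac_step k hx ha)

lemma strictMonoOn_contFrac_of_even_strictAntiOn_of_odd (k : ℕ) (hx : 0 ≤ x) :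
    (Even k → StrictMonoOn (contFrac k x) (Ioi 0)) ∧
      (Odd k → StrictAntiOn (contFrac k x) (Ioi 0)) := by
  induction k with
  | zero => exact ⟨fun _ => strictMono_id.strictMonoOn _, fun h => absurd h (by decide)⟩
  | succ k ih =>
    have hstep : StrictAntiOn (fun a => x + ((k : ℝ) + 1) / a) (Ioi 0) := fun a ha b _ hab => by
      have : ((k : ℝ) + 1) / b < ((k : ℝ) + 1) / a :=
        div_lt_div_of_pos_left (by positivity) ha hab
      simpa using this
    refine ⟨fun he => ?_, fun ho => ?_⟩
    · exact (ih.2 (Nat.even_add_one.1 he |> Nat.not_even_iff_odd.1)).comp hstep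
        (mapsTo_contFrac_step k hx)
    · exact (ih.1 (Nat.odd_add_one.1 ho |> Nat.not_odd_iff_even.1)).comp_strictAntiOn hstep
        (mapsTo_contFrac_step k hx)

end ContFrac

lemma contFrac_add_millsRatio (k : ℕ) (x : ℝ) :
    contFrac k x (x + millsIntegral (k + 1) x / millsIntegral k x) = (millsIntegral 0 x)⁻¹ := by
  induction k with
  | zero =>
    refine eq_inv_of_mul_eq_one_left ?_
    rw [contFrac, add_mul, div_mul_cancel₀ _ (millsIntegral_pos 0 x).ne']
    exact mul_millsIntegral_zero_add_one x
  | succ k ih =>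
    have hk := (millsIntegral_pos k x).ne'
    have hk1 := (millsIntegral_pos (k + 1) x).ne'
    have hstep : x + ((k : ℝ) + 1) / (x + millsIntegral (k + 2) x / millsIntegral (k + 1) x)
        = x + millsIntegral (k + 1) x / millsIntegral k x := by
      rw [millsIntegral_add_two]
      field_simp
      ring
    rw [contFrac, hstep, ih]

lemma one_sub_gaussCdf_eq_div_contFrac (k : ℕ) (x : ℝ) :
    1 - gaussCdf x
      = gaussPdf x / contFrac k x (x + millsIntegral (k + 1) x / millsIntegral k x) := by
  rw [contFrac_add_millsRatio, div_inv_eq_mul, one_sub_gaussCdf]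

lemma pos_of_hasDerivAt_neg_of_tendsto_zero {f f' : ℝ → ℝ} {a x : ℝ}
    (hf : ∀ y, HasDerivAt f (f' y) y) (hf' : ∀ y, a < y → f' y < 0)
    (hlim : Tendsto f atTop (𝓝 0)) (hx : a ≤ x) : 0 < f x := by
  have hanti : StrictAntiOn f (Ici a) :=
    strictAntiOn_of_deriv_neg (convex_Ici a) (fun y _ => (hf y).continuousAt.continuousWithinAt)
      fun y hy => by
        rw [interior_Ici] at hy
        rw [(hf y).deriv]
        exact hf' y hy
  have hx1 : x + 1 ∈ Ici a := by simp only [mem_Ici]; linarith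
  have hlater : 0 ≤ f (x + 1) := le_of_tendsto hlim <| by
    filter_upwards [eventually_ge_atTop (x + 1)] with y hy
    exact hanti.antitoneOn hx1 (hx1.out.trans hy) hy
  exact hlater.trans_lt (hanti hx hx1 (by linarith))

noncomputable def millsForm (n : ℕ) (α β γ x : ℝ) : ℝ :=
  (α * millsIntegral n x ^ 2 + β * x * millsIntegral n x * millsIntegral (n + 1) x
    + γ * millsIntegral (n + 1) x ^ 2) * exp (-x ^ 2 / 2)

section MillsForm

variable (n : ℕ) (α β γ : ℝ)

lemma hasDerivAt_millsForm (x : ℝ) : HasDerivAt (millsForm n α β γ)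
    ((-(α + β * (n + 1)) * x * millsIntegral n x ^ 2
      + (β - 2 * α - 2 * γ * (n + 1)) * millsIntegral n x * millsIntegral (n + 1) x
      + (γ - β) * x * millsIntegral (n + 1) x ^ 2) * exp (-x ^ 2 / 2)) x := by
  have ha := hasDerivAt_millsIntegral n x
  have hb := hasDerivAt_millsIntegral (n + 1) x
  have he : HasDerivAt (fun x => exp (-x ^ 2 / 2)) (exp (-x ^ 2 / 2) * -x) x :=
    (((hasDerivAt_pow 2 x).fun_neg.div_const 2).congr_deriv (by push_cast; ring)).exp
  have h := (((((ha.fun_pow 2).const_mul α).fun_add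
    ((((hasDerivAt_id' x).const_mul β).fun_mul ha).fun_mul hb)).fun_add
    ((hb.fun_pow 2).const_mul γ)).fun_mul he)
  refine h.congr_deriv ?_
  rw [millsIntegral_add_two]
  push_cast
  ring

lemma tendsto_millsForm_atTop : Tendsto (millsForm n α β γ) atTop (𝓝 0) := by
  have hbdd (j : ℕ) : millsIntegral j =O[atTop] fun _ => (1 : ℝ) := by
    refine IsBigO.of_bound (millsIntegral j 0) ?_
    filter_upwards [eventually_ge_atTop 0] with y hy
    rw [norm_of_nonneg (millsIntegral_pos j y).le, norm_one, mul_one]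
    exact (strictAnti_millsIntegral j).antitone hy
  have hsq (j : ℕ) : (fun x => millsIntegral j x ^ 2) =O[atTop] id :=
    ((hbdd j).pow 2).trans (isLittleO_const_id_atTop _).isBigO
  have hcoef : (fun x => α * millsIntegral n x ^ 2
      + β * x * millsIntegral n x * millsIntegral (n + 1) x
      + γ * millsIntegral (n + 1) x ^ 2) =O[atTop] id := by
    refine IsBigO.add (IsBigO.add ((hsq n).const_mul_left α) ?_) ((hsq (n + 1)).const_mul_left γ)
    have := (((isBigO_refl id atTop).const_mul_left β).mul (hbdd n)).mul (hbdd (n + 1))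
    simp only [id, mul_one] at this
    exact this
  refine (hcoef.mul (isBigO_refl (fun x => exp (-x ^ 2 / 2)) atTop)).trans_tendsto ?_
  simpa [neg_div] using tendsto_pow_mul_exp_linear_sub_sq 1 0

end MillsForm

section MillsRatio

variable (n : ℕ)

lemma millsIntegral_succ_sq_add_lt (x : ℝ) :
    millsIntegral (n + 1) x ^ 2 + x * millsIntegral n x * millsIntegral (n + 1) x
      < (n + 1) * millsIntegral n x ^ 2 := by
  have h := pos_of_hasDerivAt_neg_of_tendsto_zero (hasDerivAt_millsForm n (n + 1) (-1) (-1))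
    (fun y _ => ?_) (tendsto_millsForm_atTop n _ _ _) (le_refl x)
  · rw [millsForm, mul_pos_iff_of_pos_right (exp_pos _)] at h
    linarith
  · have hF := mul_pos (millsIntegral_pos n y) (millsIntegral_pos (n + 1) y)
    nlinarith [exp_pos (-y ^ 2 / 2), mul_pos hF (exp_pos (-y ^ 2 / 2))]

lemma lt_millsIntegral_succ_sq_add {x : ℝ} (hx : 0 ≤ x) :
    (n + 1 / 2) * millsIntegral n x ^ 2
      < millsIntegral (n + 1) x ^ 2 + x * millsIntegral n x * millsIntegral (n + 1) x := by
  have h := pos_of_hasDerivAt_neg_of_tendsto_zero (hasDerivAt_millsForm n (-(2 * n + 1)) 2 2)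
    (fun y hy => ?_) (tendsto_millsForm_atTop n _ _ _) hx
  · rw [millsForm, mul_pos_iff_of_pos_right (exp_pos _)] at h
    linarith
  · have hF := mul_pos (pow_pos (millsIntegral_pos n y) 2) (exp_pos (-y ^ 2 / 2))
    nlinarith [mul_pos hy hF]

lemma add_millsRatio_sq (x : ℝ) :
    (x / 2 + millsIntegral (n + 1) x / millsIntegral n x) ^ 2 = (x / 2) ^ 2
      + (millsIntegral (n + 1) x ^ 2 + x * millsIntegral n x * millsIntegral (n + 1) x)
        / millsIntegral n x ^ 2 := by
  have := (millsIntegral_pos n x).ne'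
  field_simp
  ring

lemma sqrt_add_lt_add_millsRatio {x : ℝ} (hx : 0 ≤ x) :
    √(n + 1 / 2 + (x / 2) ^ 2) + x / 2 < x + millsIntegral (n + 1) x / millsIntegral n x := by
  have hr := div_pos (millsIntegral_pos (n + 1) x) (millsIntegral_pos n x)
  suffices √(n + 1 / 2 + (x / 2) ^ 2) < x / 2 + millsIntegral (n + 1) x / millsIntegral n x by
    linarith
  have hq : n + 1 / 2 < (millsIntegral (n + 1) x ^ 2
      + x * millsIntegral n x * millsIntegral (n + 1) x) / millsIntegral n x ^ 2 := by
    rw [lt_div_iff₀ (pow_pos (millsIntegral_pos n x) 2)]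
    exact lt_millsIntegral_succ_sq_add n hx
  rw [sqrt_lt' (by positivity), add_millsRatio_sq]
  linarith

lemma add_millsRatio_lt_sqrt_add (x : ℝ) :
    x + millsIntegral (n + 1) x / millsIntegral n x < √(n + 1 + (x / 2) ^ 2) + x / 2 := by
  suffices x / 2 + millsIntegral (n + 1) x / millsIntegral n x < √(n + 1 + (x / 2) ^ 2) by
    linarith
  refine lt_sqrt_of_sq_lt ?_
  have hq : (millsIntegral (n + 1) x ^ 2 + x * millsIntegral n x * millsIntegral (n + 1) x)
      / millsIntegral n x ^ 2 < n + 1 := by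
    rw [div_lt_iff₀ (pow_pos (millsIntegral_pos n x) 2)]
    exact millsIntegral_succ_sq_add_lt n x
  rw [add_millsRatio_sq]
  linarith

end MillsRatio

/-- Shenton's bounds, odd case: φ/h_{2m+1,1} < 1 - Φ < φ/h_{2m+1,2} on [0,∞). -/
theorem shenton_bounds_odd (m : ℕ) (x : ℝ) (hx : 0 ≤ x) :
    gaussPdf x /
        hcf (2 * m + 1)
          (fun t => Real.sqrt ((2 * m + 1 : ℝ) + 1 / 2 + (t / 2) ^ 2) + t / 2) x <
      1 - gaussCdf x ∧
    1 - gaussCdf x <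
      gaussPdf x /
        hcf (2 * m + 1)
          (fun t => Real.sqrt ((2 * m + 1 : ℝ) + 2 / 2 + (t / 2) ^ 2) + t / 2) x := by
  have hanti := (strictMonoOn_contFrac_of_even_strictAntiOn_of_odd (2 * m + 1) hx).2
    (odd_two_mul_add_one m)
  have hlower := sqrt_add_lt_add_millsRatio (2 * m + 1) hx
  have hupper := add_millsRatio_lt_sqrt_add (2 * m + 1) x
  push_cast at hlower hupper
  have hexact : 0 < x + millsIntegral (2 * m + 1 + 1) x / millsIntegral (2 * m + 1) x :=
    add_pos_of_nonneg_of_pos hx (div_pos (millsIntegral_pos _ x) (millsIntegral_pos _ x))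
  rw [hcf_eq_contFrac, hcf_eq_contFrac, one_sub_gaussCdf_eq_div_contFrac (2 * m + 1),
    div_self two_ne_zero]
  constructor
  · have hg : 0 < √((2 * m + 1 : ℝ) + 1 / 2 + (x / 2) ^ 2) + x / 2 := by positivity
    exact div_lt_div_of_pos_left (gaussPdf_pos x) (contFrac_pos _ hx hexact)
      (hanti hg hexact hlower)
  · have hg : 0 < √((2 * m + 1 : ℝ) + 1 + (x / 2) ^ 2) + x / 2 := by positivity
    exact div_lt_div_of_pos_left (gaussPdf_pos x) (contFrac_pos _ hx hg)
      (hanti hexact hg hupper)
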